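/- arXiv:quant-ph/0507024 — 3 statements merged into one kernel-verified Lean document; each statement's English description precedes it below -/
import Mathlib

section
/- Let Ω be a locally compact second countable topological group with a left Haar measure ν, X a Banach space, and h : Ω → X a ν-measurable, ν-essentially bounded function such that for each y ∈ Ω the translate h(y·) coincides with h ν-almost everywhere. Then there is a vector s ∈ X such that h(x) = s for ν-almost all x ∈ Ω. -/
open MeasureTheory Filter Set Function

theorem stmt7 {Ω : Type*} [Group Ω] [TopologicalSpace Ω] [IsTopologicalGroup Ω] [T2Space Ω]
    [LocallyCompactSpace Ω] [SecondCountableTopology Ω] [MeasurableSpace Ω] [BorelSpace Ω]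
    (ν : Measure Ω) [ν.IsHaarMeasure]
    {X : Type*} [NormedAddCommGroup X] [NormedSpace ℝ X] [CompleteSpace X]
    (h : Ω → X) (hmeas : AEStronglyMeasurable h ν)
    (hbdd : ∃ M : ℝ, ∀ᵐ x ∂ν, ‖h x‖ ≤ M)
    (hinv : ∀ y : Ω, (fun x => h (y * x)) =ᵐ[ν] h) :
    ∃ s : X, h =ᵐ[ν] fun _ => s := by
  borelize X
  have : Nonempty X := ⟨0⟩
  rcases hmeas.isSeparable_ae_range with ⟨t, ht, hgt⟩
  haveI := ht.secondCountableTopology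
  refine exists_eventuallyEq_const_of_eventually_mem_of_forall_separating MeasurableSet hgt ?_
  intro U hU
  have hconst : EventuallyConst (h ⁻¹' U) (ae ν) := by
    refine aeconst_of_forall_preimage_smul_ae_eq Ω
      (hmeas.aemeasurable.nullMeasurable hU) fun g => ?_
    exact (hinv g).mono fun x hx => congrArg (· ∈ U) hx
  exact eventuallyConst_set.mp hconst
end

section
/- Let E : B(G) → L(H) be a β-covariant observable. Then for each trace class operator S ∈ T(H), the complex measure B ↦ Tr[S E(B)] is absolutely continuous with respect to the Haar measure λ. -/
open scoped InnerProductSpace ENNReal ComplexOrder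
open MeasureTheory

noncomputable section

namespace QuantPaper

variable {H : Type*} [NormedAddCommGroup H] [InnerProductSpace ℂ H]

/-- The trace norm of a bounded operator, with values in `[0,∞]`, defined as the supremum
over pairs of finite orthonormal systems `e`, `f` of `∑ i, ‖⟪f i, A (e i)⟫‖`. -/
def traceNormENN (A : H →L[ℂ] H) : ℝ≥0∞ :=
  ⨆ (n : ℕ) (e : Fin n → H) (f : Fin n → H) (_ : Orthonormal ℂ e) (_ : Orthonormal ℂ f),
    ∑ i, (‖⟪f i, A (e i)⟫_ℂ‖₊ : ℝ≥0∞)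

/-- An operator is trace class if its trace norm is finite. -/
def IsTraceClass (A : H →L[ℂ] H) : Prop := traceNormENN A ≠ ∞

/-- The trace norm, as a real number (junk value `0` if `A` is not trace class). -/
def traceNorm (A : H →L[ℂ] H) : ℝ := (traceNormENN A).toReal

variable (H) in
/-- The index set of a fixed Hilbert basis of `H`. -/
def hbIndex [CompleteSpace H] : Set H := (exists_hilbertBasis ℂ H).choose

variable (H) in
/-- A fixed Hilbert basis of `H`. -/
def hb [CompleteSpace H] : HilbertBasis (hbIndex H) ℂ H :=
  (exists_hilbertBasis ℂ H).choose_spec.choose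

/-- The trace of an operator, computed in the fixed Hilbert basis.  For a trace class
operator this is the trace. -/
def traceC [CompleteSpace H] (A : H →L[ℂ] H) : ℂ :=
  ∑' i : hbIndex H, ⟪(hb H i : H), A (hb H i)⟫_ℂ

/-- The trace of an operator in `[0,∞]`, computed in the fixed Hilbert basis.  For a
positive operator this is the (possibly infinite) trace. -/
def traceENN [CompleteSpace H] (A : H →L[ℂ] H) : ℝ≥0∞ :=
  ∑' i : hbIndex H, ENNReal.ofReal (⟪(hb H i : H), A (hb H i)⟫_ℂ).re

/-- The rank-one operator `|φ⟩⟨φ|`. -/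
def rankOne (φ : H) : H →L[ℂ] H := (innerSL ℂ φ).smulRight φ

/-- `P` is a one-dimensional (orthogonal) projection. -/
def IsRankOneProjection [CompleteSpace H] (P : H →L[ℂ] H) : Prop :=
  IsSelfAdjoint P ∧ P ∘L P = P ∧ Module.finrank ℂ (LinearMap.range (P : H →ₗ[ℂ] H)) = 1

/-- The set of trace class operators on `H`. -/
abbrev TC (H : Type*) [NormedAddCommGroup H] [InnerProductSpace ℂ H] :=
  {A : H →L[ℂ] H // IsTraceClass A}

/-- A positive trace-norm preserving linear bijection of the set of trace class
operators, i.e. an element of `Aut(T(H))`. -/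
structure TraceAut (H : Type*) [NormedAddCommGroup H] [InnerProductSpace ℂ H]
    [CompleteSpace H] where
  toFun : TC H → TC H
  invFun : TC H → TC H
  left_inv : ∀ S, invFun (toFun S) = S
  right_inv : ∀ S, toFun (invFun S) = S
  map_add : ∀ S T U : TC H, S.1 + T.1 = U.1 → (toFun U).1 = (toFun S).1 + (toFun T).1
  map_smul : ∀ (c : ℂ) (S U : TC H), c • S.1 = U.1 → (toFun U).1 = c • (toFun S).1
  pos : ∀ S : TC H, S.1.IsPositive → (toFun S).1.IsPositive
  isom : ∀ S : TC H, traceNormENN (toFun S).1 = traceNormENN S.1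

/-- The abstract system `(G, β, d)` of the paper: a continuous homomorphism
`β : G → Aut(T(H))` together with a constant `d > 0` such that
`∫ Tr[P₁ β(g)(P₂)] dλ(g) = d` for all one-dimensional projections `P₁, P₂`. -/
structure CovariantSystem (G : Type*) [Group G] [TopologicalSpace G]
    (H : Type*) [NormedAddCommGroup H] [InnerProductSpace ℂ H] [CompleteSpace H]
    [MeasurableSpace G] (lam : Measure G) where
  β : G → TraceAut H
  d : ℝ
  d_pos : 0 < d
  /-- `β` is a group homomorphism into `Aut(T(H))`. -/
  map_mul : ∀ (g h : G) (S : TC H), (β (g * h)).toFun S = (β g).toFun ((β h).toFun S)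
  map_one : ∀ S : TC H, (β 1).toFun S = S
  /-- `β` is continuous for the weak topology on `Aut(T(H))` generated by the
  functionals `u ↦ Tr[A u(T)]`. -/
  continuous : ∀ (A : H →L[ℂ] H) (T : TC H),
    Continuous fun g : G => traceC (A ∘L ((β g).toFun T).1)
  /-- the square-integrability condition (2) of the paper. -/
  d_eq : ∀ (P₁ P₂ : H →L[ℂ] H) (h₂ : IsTraceClass P₂),
    IsRankOneProjection P₁ → IsRankOneProjection P₂ →
    ∫ g, (traceC (P₁ ∘L ((β g).toFun ⟨P₂, h₂⟩).1)).re ∂lam = d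


/-- `E` is an observable: a positive normalized operator measure, σ-additive in the
weak operator topology. -/
def IsObservable {G : Type*} [MeasurableSpace G]
    {H : Type*} [NormedAddCommGroup H] [InnerProductSpace ℂ H] [CompleteSpace H]
    (E : Set G → H →L[ℂ] H) : Prop :=
  (∀ B : Set G, MeasurableSet B → (E B).IsPositive) ∧
  E Set.univ = 1 ∧
  ∀ B : ℕ → Set G, (∀ n, MeasurableSet (B n)) → Pairwise (Function.onFun Disjoint B) →
    ∀ x y : H, HasSum (fun n => ⟪x, E (B n) y⟫_ℂ) ⟪x, E (⋃ n, B n) y⟫_ℂ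

variable {G : Type*} [Group G] [TopologicalSpace G] [IsTopologicalGroup G] [T2Space G]
  [LocallyCompactSpace G] [SecondCountableTopology G] [MeasurableSpace G] [BorelSpace G]
  {H : Type*} [NormedAddCommGroup H] [InnerProductSpace ℂ H] [CompleteSpace H]
  [TopologicalSpace.SeparableSpace H]

theorem stmt14 (lam : Measure G) [lam.IsHaarMeasure] [lam.IsMulRightInvariant]
    (sys : CovariantSystem G H lam)
    (E : Set G → H →L[ℂ] H) (hE : IsObservable E)
    -- `E` is `β`-covariant: `β(g)*(E(B)) = E(g⁻¹ B)`:
    (hcov : ∀ (g : G) (B : Set G), MeasurableSet B →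
      ∀ (S : H →L[ℂ] H) (hS : IsTraceClass S),
        traceC (((sys.β g).toFun ⟨S, hS⟩).1 ∘L E B) = traceC (S ∘L E ((g * ·) ⁻¹' B))) :
    -- each complex measure `B ↦ Tr[S E(B)]` is absolutely continuous w.r.t. `λ`:
    ∀ (S : H →L[ℂ] H), IsTraceClass S →
      ∀ B : Set G, MeasurableSet B → lam B = 0 → traceC (S ∘L E B) = 0 := by
  obtain ⟨hpos, huniv, hadd⟩ := hE
  intro S hS B hB hB0
  -- nonnegativity of the quadratic forms
  have hnn : ∀ (s : Set G), MeasurableSet s → ∀ x : H, 0 ≤ (⟪x, E s x⟫_ℂ).re := by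
    intro s hs x
    exact (Complex.nonneg_iff.mp ((hpos s hs).inner_nonneg_right x)).1
  -- the quadratic form of `E ∅` vanishes
  have hE0 : ∀ x : H, ⟪x, E ∅ x⟫_ℂ = 0 := by
    intro x
    have h := hadd (fun _ => (∅ : Set G)) (fun _ => MeasurableSet.empty)
      (fun i j _ => disjoint_bot_left) x x
    rw [Set.iUnion_empty] at h
    exact tendsto_nhds_unique tendsto_const_nhds h.summable.tendsto_atTop_zero
  have hpre : ∀ g : G, MeasurableSet ((g * ·) ⁻¹' B) := fun g => (measurable_const_mul g) hB
  -- key a.e. statement, for each vector φ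
  have key : ∀ φ : H, ∀ᵐ g ∂lam, (⟪φ, E ((g * ·) ⁻¹' B) φ⟫_ℂ).re = 0 := by
    intro φ
    -- the measure `s ↦ Re⟪φ, E s φ⟫`
    obtain ⟨ν, hν_apply⟩ : ∃ ν : Measure G, ∀ s : Set G, MeasurableSet s →
        ν s = ENNReal.ofReal (⟪φ, E s φ⟫_ℂ).re := by
      refine ⟨Measure.ofMeasurable (fun s _ => ENNReal.ofReal (⟪φ, E s φ⟫_ℂ).re)
        (by simp [hE0 φ]) ?_, fun s hs => Measure.ofMeasurable_apply s hs⟩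
      intro f hf hdisj
      have h := hadd f hf hdisj φ φ
      have hre : HasSum (fun n => (⟪φ, E (f n) φ⟫_ℂ).re) (⟪φ, E (⋃ n, f n) φ⟫_ℂ).re :=
        Complex.hasSum_re h
      show ENNReal.ofReal (⟪φ, E (⋃ i, f i) φ⟫_ℂ).re = ∑' i, ENNReal.ofReal (⟪φ, E (f i) φ⟫_ℂ).re
      rw [← hre.tsum_eq, ENNReal.ofReal_tsum_of_nonneg (fun n => hnn _ (hf n) φ) hre.summable]
    haveI : IsFiniteMeasure ν := by
      refine ⟨?_⟩
      rw [hν_apply _ MeasurableSet.univ]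
      exact ENNReal.ofReal_lt_top
    have hBmul : MeasurableSet ((fun p : G × G => p.1 * p.2) ⁻¹' B) := measurable_mul hB
    have hmeas : Measurable fun g : G => ν ((g * ·) ⁻¹' B) :=
      measurable_measure_prodMk_left hBmul
    have hzero : ∫⁻ g, ν ((g * ·) ⁻¹' B) ∂lam = 0 := by
      calc ∫⁻ g, ν ((g * ·) ⁻¹' B) ∂lam
          = ∫⁻ g, ∫⁻ h, B.indicator (fun _ => (1 : ℝ≥0∞)) (g * h) ∂ν ∂lam := by
            refine lintegral_congr fun g => ?_
            rw [← lintegral_indicator_one (hpre g)]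
            refine lintegral_congr fun h => ?_
            by_cases hh : g * h ∈ B <;> simp [Set.indicator_apply, hh]
        _ = ∫⁻ h, ∫⁻ g, B.indicator (fun _ => (1 : ℝ≥0∞)) (g * h) ∂lam ∂ν := by
            refine lintegral_lintegral_swap ?_
            exact ((measurable_one.indicator hB).comp measurable_mul).aemeasurable
        _ = ∫⁻ h, lam B ∂ν := by
            refine lintegral_congr fun h => ?_
            calc ∫⁻ g, B.indicator (fun _ => (1 : ℝ≥0∞)) (g * h) ∂lam
                = ∫⁻ g, ((· * h) ⁻¹' B).indicator (fun _ => (1 : ℝ≥0∞)) g ∂lam := by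
                  refine lintegral_congr fun g => ?_
                  by_cases hg : g * h ∈ B <;> simp [Set.indicator_apply, hg]
              _ = lam ((· * h) ⁻¹' B) := lintegral_indicator_one ((measurable_mul_const h) hB)
              _ = lam B := measure_preimage_mul_right lam h B
        _ = 0 := by simp [hB0]
    have hae : ∀ᵐ g ∂lam, ν ((g * ·) ⁻¹' B) = 0 := (lintegral_eq_zero_iff hmeas).mp hzero
    filter_upwards [hae] with g hg
    rw [hν_apply _ (hpre g)] at hg
    exact le_antisymm (ENNReal.ofReal_eq_zero.mp hg) (hnn _ (hpre g) φ)
  -- find a single `g₀` working simultaneously for a countable dense set of vectors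
  obtain ⟨D, hDc, hDd⟩ := TopologicalSpace.exists_countable_dense H
  have hN : lam (⋃ φ ∈ D, {g : G | (⟪φ, E ((g * ·) ⁻¹' B) φ⟫_ℂ).re ≠ 0}) = 0 :=
    (measure_biUnion_null_iff hDc).mpr fun φ _ => ae_iff.mp (key φ)
  have hg₀ : ∃ g₀ : G, ∀ φ ∈ D, (⟪φ, E ((g₀ * ·) ⁻¹' B) φ⟫_ℂ).re = 0 := by
    by_contra hcon
    push_neg at hcon
    have hsub : (Set.univ : Set G) ⊆ ⋃ φ ∈ D, {g : G | (⟪φ, E ((g * ·) ⁻¹' B) φ⟫_ℂ).re ≠ 0} := by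
      intro g _
      obtain ⟨φ, hφD, hφ⟩ := hcon g
      exact Set.mem_biUnion hφD hφ
    exact isOpen_univ.measure_ne_zero lam Set.univ_nonempty (measure_mono_null hsub hN)
  obtain ⟨g₀, hg₀⟩ := hg₀
  set C : Set G := (g₀ * ·) ⁻¹' B with hC_def
  have hC : MeasurableSet C := hpre g₀
  -- the quadratic form of `E C` vanishes on a dense set, hence everywhere
  have hre0 : ∀ x : H, (⟪x, E C x⟫_ℂ).re = 0 := by
    have hcont : Continuous fun x : H => (⟪x, E C x⟫_ℂ).re :=
      Complex.continuous_re.comp (continuous_id.inner (E C).continuous)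
    have := hcont.ext_on hDd continuous_const (fun x hx => hg₀ x hx)
    exact fun x => congrFun this x
  -- self-adjointness: the quadratic form is real, so it vanishes
  have hsym : ∀ x y : H, ⟪E C x, y⟫_ℂ = ⟪x, E C y⟫_ℂ := by
    have h := (hpos C hC).isSelfAdjoint.isSymmetric
    exact fun x y => h x y
  have hq0 : ∀ x : H, ⟪E C x, x⟫_ℂ = 0 := by
    intro x
    have him : (starRingEnd ℂ) ⟪x, E C x⟫_ℂ = ⟪x, E C x⟫_ℂ :=
      (inner_conj_symm (E C x) x).trans (hsym x x)
    have him0 : (⟪x, E C x⟫_ℂ).im = 0 := Complex.conj_eq_iff_im.mp him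
    have : ⟪x, E C x⟫_ℂ = 0 := Complex.ext (hre0 x) him0
    rw [← inner_conj_symm, this, map_zero]
  -- hence `E C = 0`
  have hEC : E C = 0 := by
    have : (E C : H →ₗ[ℂ] H) = 0 := (inner_map_self_eq_zero _).mp hq0
    ext x
    have := congrFun (congrArg DFunLike.coe this) x
    simpa using this
  -- transport back to `B` via covariance
  have hset : ((g₀⁻¹ * ·) ⁻¹' C) = B := by
    ext h
    simp [hC_def, Set.mem_preimage]
  have h := hcov g₀⁻¹ C hC S hS
  rw [hset, hEC, ContinuousLinearMap.comp_zero] at h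
  rw [← h]
  simp [traceC]

end QuantPaper
end
end

section
/- Let Γ : F(G) → O(H) be a linear map satisfying: (i) Γ is positive and quasicontinuous; (ii) Γ maps bounded Borel functions to bounded operators in L(H); (iii) for each f ∈ F(G), the domain of Γ(f) consists exactly of those vectors φ ∈ H for which f is integrable with respect to the complex measure E^Γ_{ψ,φ} : B ↦ ⟨ψ | Γ(χ_B) φ⟩ for every ψ ∈ H. Then Γ(f) = L(f, E^Γ) for all f ∈ F(G), where E^Γ is the positive operator measure B ↦ Γ(χ_B) and L(f, E^Γ) is the operator integral of f with respect to E^Γ. -/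
open scoped InnerProductSpace ENNReal ComplexOrder
open MeasureTheory

noncomputable section

namespace QuantPaper

/-- `f` is integrable with respect to the complex measure `μ`. -/
def CMIntegrable {G : Type*} [MeasurableSpace G] (μ : ComplexMeasure G) (f : G → ℂ) : Prop :=
  Integrable f
    ((ComplexMeasure.re μ).totalVariation + (ComplexMeasure.im μ).totalVariation)

/-- The integral of `f` with respect to the complex measure `μ`. -/
def cmIntegral {G : Type*} [MeasurableSpace G] (μ : ComplexMeasure G) (f : G → ℂ) : ℂ :=
  ((∫ x, f x ∂(ComplexMeasure.re μ).toJordanDecomposition.posPart)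
      - ∫ x, f x ∂(ComplexMeasure.re μ).toJordanDecomposition.negPart)
    + Complex.I * ((∫ x, f x ∂(ComplexMeasure.im μ).toJordanDecomposition.posPart)
      - ∫ x, f x ∂(ComplexMeasure.im μ).toJordanDecomposition.negPart)

section Aux

variable {G : Type*} [MeasurableSpace G] {μ : ComplexMeasure G} {f g : G → ℂ}

lemma CMIntegrable.parts (h : CMIntegrable μ f) :
    Integrable f (ComplexMeasure.re μ).toJordanDecomposition.posPart ∧
    Integrable f (ComplexMeasure.re μ).toJordanDecomposition.negPart ∧
    Integrable f (ComplexMeasure.im μ).toJordanDecomposition.posPart ∧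
    Integrable f (ComplexMeasure.im μ).toJordanDecomposition.negPart := by
  have hp : ∀ ν : SignedMeasure G, ν.toJordanDecomposition.posPart ≤ ν.totalVariation :=
    fun ν s => le_add_right le_rfl
  have hn : ∀ ν : SignedMeasure G, ν.toJordanDecomposition.negPart ≤ ν.totalVariation :=
    fun ν s => le_add_left le_rfl
  have hL : (ComplexMeasure.re μ).totalVariation ≤
      (ComplexMeasure.re μ).totalVariation + (ComplexMeasure.im μ).totalVariation :=
    fun s => le_add_right le_rfl
  have hR : (ComplexMeasure.im μ).totalVariation ≤
      (ComplexMeasure.re μ).totalVariation + (ComplexMeasure.im μ).totalVariation :=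
    fun s => le_add_left le_rfl
  have h1 := (hp _).trans hL
  have h2 := (hn _).trans hL
  have h3 := (hp _).trans hR
  have h4 := (hn _).trans hR
  exact ⟨h.mono_measure h1, h.mono_measure h2, h.mono_measure h3, h.mono_measure h4⟩

lemma cmIntegrable_of_bounded (hf : Measurable f) {M : ℝ} (hM : ∀ x, ‖f x‖ ≤ M) :
    CMIntegrable μ f := by
  haveI : IsFiniteMeasure ((ComplexMeasure.re μ).totalVariation
      + (ComplexMeasure.im μ).totalVariation) := by
    rw [SignedMeasure.totalVariation, SignedMeasure.totalVariation]
    infer_instance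
  exact ⟨hf.aestronglyMeasurable, HasFiniteIntegral.of_bounded (ae_of_all _ hM)⟩

lemma cmIntegral_indicator_const {B : Set G} (hB : MeasurableSet B) (c : ℂ) :
    cmIntegral μ (B.indicator fun _ => c) = μ B * c := by
  have hre : ((ComplexMeasure.re μ) B : ℂ) =
      (((ComplexMeasure.re μ).toJordanDecomposition.posPart B).toReal : ℝ)
        - ((ComplexMeasure.re μ).toJordanDecomposition.negPart B).toReal := by
    conv_lhs => rw [← (ComplexMeasure.re μ).toSignedMeasure_toJordanDecomposition]
    rw [JordanDecomposition.toSignedMeasure, Measure.toSignedMeasure_sub_apply hB]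
    push_cast [measureReal_def]; ring
  have him : ((ComplexMeasure.im μ) B : ℂ) =
      (((ComplexMeasure.im μ).toJordanDecomposition.posPart B).toReal : ℝ)
        - ((ComplexMeasure.im μ).toJordanDecomposition.negPart B).toReal := by
    conv_lhs => rw [← (ComplexMeasure.im μ).toSignedMeasure_toJordanDecomposition]
    rw [JordanDecomposition.toSignedMeasure, Measure.toSignedMeasure_sub_apply hB]
    push_cast [measureReal_def]; ring
  have hμB : μ B = ((ComplexMeasure.re μ) B : ℂ) + ((ComplexMeasure.im μ) B : ℂ) * Complex.I := by
    show μ B = ((μ B).re : ℂ) + ((μ B).im : ℂ) * Complex.I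
    exact (Complex.re_add_im _).symm
  rw [cmIntegral, integral_indicator_const c hB, integral_indicator_const c hB,
    integral_indicator_const c hB, integral_indicator_const c hB, hμB, hre, him]
  push_cast [Complex.real_smul, measureReal_def]
  ring

lemma cmIntegral_smul_add (a b : ℂ) (hf : CMIntegrable μ f) (hg : CMIntegrable μ g) :
    cmIntegral μ (a • f + b • g) = a * cmIntegral μ f + b * cmIntegral μ g := by
  obtain ⟨h1, h2, h3, h4⟩ := hf.parts
  obtain ⟨g1, g2, g3, g4⟩ := hg.parts
  have key : ∀ ν : Measure G, Integrable f ν → Integrable g ν →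
      ∫ x, (a • f + b • g) x ∂ν = a * ∫ x, f x ∂ν + b * ∫ x, g x ∂ν := by
    intro ν hfν hgν
    simp only [Pi.add_apply, Pi.smul_apply, smul_eq_mul]
    rw [integral_add (hfν.const_mul a) (hgν.const_mul b), integral_const_mul, integral_const_mul]
  rw [cmIntegral, key _ h1 g1, key _ h2 g2, key _ h3 g3, key _ h4 g4, cmIntegral, cmIntegral]
  ring

lemma tendsto_cmIntegral {fs : ℕ → G → ℂ} (hfs : ∀ k, Measurable (fs k))
    (hf : Measurable f) (hint : CMIntegrable μ f)
    (hbound : ∀ k x, ‖fs k x‖ ≤ ‖f x‖)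
    (htend : ∀ x, Filter.Tendsto (fun k => fs k x) Filter.atTop (nhds (f x))) :
    Filter.Tendsto (fun k => cmIntegral μ (fs k)) Filter.atTop (nhds (cmIntegral μ f)) := by
  obtain ⟨h1, h2, h3, h4⟩ := hint.parts
  have key : ∀ ν : Measure G, Integrable f ν →
      Filter.Tendsto (fun k => ∫ x, fs k x ∂ν) Filter.atTop (nhds (∫ x, f x ∂ν)) := by
    intro ν hfν
    refine tendsto_integral_of_dominated_convergence (fun x => ‖f x‖)
      (fun k => (hfs k).aestronglyMeasurable) hfν.norm
      (fun k => ae_of_all _ (hbound k)) (ae_of_all _ htend)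
  exact (((key _ h1).sub (key _ h2)).add
    (((key _ h3).sub (key _ h4)).const_mul Complex.I)).congr' (by
      filter_upwards with k; simp [cmIntegral]) |>.congr (fun k => rfl) |>.mono_right le_rfl
    |>.congr (fun k => rfl) |>.mono_right (by rw [cmIntegral])

end Aux

theorem stmt18 {G : Type*} [Group G] [TopologicalSpace G] [IsTopologicalGroup G] [T2Space G]
    [LocallyCompactSpace G] [SecondCountableTopology G] [MeasurableSpace G] [BorelSpace G]
    {H : Type*} [NormedAddCommGroup H] [InnerProductSpace ℂ H] [CompleteSpace H]
    -- a map from (Borel) functions to not necessarily bounded operators in `H`: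
    (Γ : (G → ℂ) → (H →ₗ.[ℂ] H))
    -- `Γ` is linear: `αΓ(f) + βΓ(h) ⊆ Γ(αf + βh)`:
    (hlin : ∀ (a b : ℂ) (f h : G → ℂ), Measurable f → Measurable h →
      a • Γ f + b • Γ h ≤ Γ (a • f + b • h))
    -- (i) `Γ` is positive
    (hpos : ∀ f : G → ℂ, Measurable f → (∀ x, 0 ≤ f x) →
      ∀ φ : (Γ f).domain, 0 ≤ ⟪(φ : H), (Γ f) φ⟫_ℂ)
    -- ... and quasicontinuous:
    (hqc : ∀ f : G → ℂ, Measurable f → ∀ fs : ℕ → G → ℂ, (∀ k, Measurable (fs k)) →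
      (∀ k x, 0 ≤ fs k x) → (∀ k x, fs k x ≤ fs (k + 1) x) →
      (∀ x, Filter.Tendsto (fun k => fs k x) Filter.atTop (nhds (f x))) →
      ∀ (ψ φ : H) (hf : φ ∈ (Γ f).domain) (hn : ∀ k, φ ∈ (Γ (fs k)).domain),
        Filter.Tendsto (fun k => ⟪ψ, (Γ (fs k)) ⟨φ, hn k⟩⟫_ℂ) Filter.atTop
          (nhds ⟪ψ, (Γ f) ⟨φ, hf⟩⟫_ℂ))
    -- (ii) `Γ` maps bounded functions to bounded everywhere-defined operators:
    (hbdd : ∀ f : G → ℂ, Measurable f → (∃ M : ℝ, ∀ x, ‖f x‖ ≤ M) →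
      (Γ f).domain = ⊤ ∧ ∃ C : ℝ, ∀ φ : (Γ f).domain, ‖(Γ f) φ‖ ≤ C * ‖(φ : H)‖)
    -- the family of complex measures `E^Γ_{ψ,φ} : B ↦ ⟪ψ, Γ(χ_B) φ⟫`:
    (Eμ : H → H → ComplexMeasure G)
    (hEμ : ∀ (ψ φ : H) (B : Set G), MeasurableSet B →
      ∀ hφ : φ ∈ (Γ (B.indicator fun _ => (1 : ℂ))).domain,
        Eμ ψ φ B = ⟪ψ, (Γ (B.indicator fun _ => (1 : ℂ))) ⟨φ, hφ⟩⟫_ℂ)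
    -- (iii) the domain of `Γ(f)` consists of the vectors `φ` such that `f` is
    -- `E^Γ_{ψ,φ}`-integrable for all `ψ`:
    (hdom : ∀ f : G → ℂ, Measurable f →
      ∀ φ : H, (φ ∈ (Γ f).domain ↔ ∀ ψ : H, CMIntegrable (Eμ ψ φ) f)) :
    -- then `Γ(f) = L(f, E^Γ)` for every Borel function `f`:
    ∀ f : G → ℂ, Measurable f →
      (∀ φ : H, (φ ∈ (Γ f).domain ↔ ∀ ψ : H, CMIntegrable (Eμ ψ φ) f)) ∧
      ∀ (φ : (Γ f).domain) (ψ : H), ⟪ψ, (Γ f) φ⟫_ℂ = cmIntegral (Eμ ψ (φ : H)) f := by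
  classical
  -- membership in the (full) domain of Γ of a bounded function
  have hmem_bdd : ∀ u : G → ℂ, Measurable u → (∃ M : ℝ, ∀ x, ‖u x‖ ≤ M) →
      ∀ φ : H, φ ∈ (Γ u).domain := by
    intro u hu hb φ; rw [(hbdd u hu hb).1]; exact Submodule.mem_top
  -- the value of Γ at a linear combination
  have hval : ∀ (a b : ℂ) (u v w : G → ℂ), Measurable u → Measurable v →
      a • u + b • v = w → ∀ (φ : H) (hu : φ ∈ (Γ u).domain) (hv : φ ∈ (Γ v).domain),
      ∃ hw : φ ∈ (Γ w).domain,
        (Γ w) ⟨φ, hw⟩ = a • (Γ u) ⟨φ, hu⟩ + b • (Γ v) ⟨φ, hv⟩ := by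
    intro a b u v w hu hv hw φ hmu hmv
    subst hw
    have hle := hlin a b u v hu hv
    have hx : φ ∈ (a • Γ u + b • Γ v).domain := by
      rw [LinearPMap.add_domain]
      exact Submodule.mem_inf.2 ⟨hmu, hmv⟩
    refine ⟨hle.1 hx, ?_⟩
    rw [← hle.2 (x := ⟨φ, hx⟩) (y := ⟨φ, hle.1 hx⟩) rfl]
    rfl
  -- membership for indicators
  have hχmem : ∀ B : Set G, MeasurableSet B → ∀ φ : H,
      φ ∈ (Γ (B.indicator fun _ => (1 : ℂ))).domain := by
    intro B hB φ
    refine hmem_bdd _ (measurable_const.indicator hB) ⟨1, fun x => ?_⟩ φ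
    by_cases hx : x ∈ B <;> simp [Set.indicator, hx]
  -- the statement for simple functions
  have hsimple : ∀ s : SimpleFunc G ℂ, ∀ (ψ φ : H) (hφ : φ ∈ (Γ ⇑s).domain),
      ⟪ψ, (Γ ⇑s) ⟨φ, hφ⟩⟫_ℂ = cmIntegral (Eμ ψ φ) ⇑s := by
    intro s
    induction s using SimpleFunc.induction with
    | @const c B hB =>
      intro ψ φ
      have hcoe : ⇑(SimpleFunc.piecewise B hB (SimpleFunc.const G c) (SimpleFunc.const G 0))
          = B.indicator fun _ => c := by
        funext x; by_cases hx : x ∈ B <;>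
          simp [SimpleFunc.piecewise_apply, Set.indicator, hx]
      rw [hcoe]
      intro hφ
      have hχ : Measurable (B.indicator fun _ : G => (1 : ℂ)) := measurable_const.indicator hB
      have hfun : c • (B.indicator fun _ : G => (1 : ℂ))
          + (0 : ℂ) • (B.indicator fun _ : G => (1 : ℂ)) = B.indicator fun _ => c := by
        funext x; by_cases hx : x ∈ B <;> simp [Set.indicator, hx]
      obtain ⟨hw, hwval⟩ := hval c 0 _ _ _ hχ hχ hfun φ (hχmem B hB φ) (hχmem B hB φ)
      rw [show (⟨φ, hφ⟩ : (Γ (B.indicator fun _ => c)).domain) = ⟨φ, hw⟩ from rfl, hwval]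
      rw [inner_add_right, inner_smul_right, inner_smul_right,
        cmIntegral_indicator_const hB c, ← hEμ ψ φ B hB (hχmem B hB φ)]
      ring
    | @add s t hdis hs ht =>
      intro ψ φ
      rw [SimpleFunc.coe_add]
      intro hφ
      obtain ⟨Ms, hMs⟩ := s.exists_forall_norm_le
      obtain ⟨Mt, hMt⟩ := t.exists_forall_norm_le
      have hmems := hmem_bdd _ s.measurable ⟨Ms, hMs⟩ φ
      have hmemt := hmem_bdd _ t.measurable ⟨Mt, hMt⟩ φ
      have hfun : (1 : ℂ) • ⇑s + (1 : ℂ) • ⇑t = ⇑s + ⇑t := by funext x; simp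
      obtain ⟨hw, hwval⟩ := hval 1 1 _ _ _ s.measurable t.measurable hfun φ hmems hmemt
      rw [show (⟨φ, hφ⟩ : (Γ (⇑s + ⇑t)).domain) = ⟨φ, hw⟩ from rfl, hwval, inner_add_right,
        one_smul, one_smul, hs ψ φ hmems, ht ψ φ hmemt]
      have h2 := cmIntegral_smul_add (μ := Eμ ψ φ) 1 1
        (cmIntegrable_of_bounded s.measurable hMs) (cmIntegrable_of_bounded t.measurable hMt)
      rw [hfun] at h2
      rw [h2]; ring
  -- the statement for nonnegative functions
  have hnonneg : ∀ u : G → ℂ, Measurable u → (∀ x, 0 ≤ u x) →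
      ∀ (ψ φ : H) (hφ : φ ∈ (Γ u).domain),
        ⟪ψ, (Γ u) ⟨φ, hφ⟩⟫_ℂ = cmIntegral (Eμ ψ φ) u := by
    intro u hu hupos ψ φ hφ
    have hled := fun x => Complex.le_def.1 (hupos x)
    have hre : ∀ x, 0 ≤ (u x).re := by
      intro x; simpa using (hled x).1
    have hux : ∀ x, ((u x).re : ℂ) = u x := by
      intro x
      have him : (u x).im = 0 := by simpa using (hled x).2.symm
      rw [← Complex.re_add_im (u x), him]; simp
    set r : G → ℝ≥0∞ := fun x => ENNReal.ofReal (u x).re with hrdef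
    have hrmeas : Measurable r := (Complex.measurable_re.comp hu).ennreal_ofReal
    set S : ℕ → SimpleFunc G ℂ :=
      fun k => (SimpleFunc.eapprox r k).map (fun t => ((t.toReal : ℝ) : ℂ)) with hSdef
    have hS : ∀ k x, (S k : G → ℂ) x = (((SimpleFunc.eapprox r k x).toReal : ℝ) : ℂ) :=
      fun k x => rfl
    have hSmeas : ∀ k, Measurable (S k : G → ℂ) := fun k => (S k).measurable
    have hSpos : ∀ k x, 0 ≤ (S k : G → ℂ) x := fun k x =>
      Complex.zero_le_real.2 ENNReal.toReal_nonneg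
    have hSmono : ∀ k x, (S k : G → ℂ) x ≤ (S (k + 1) : G → ℂ) x := by
      intro k x
      rw [hS, hS]
      exact Complex.real_le_real.2 (ENNReal.toReal_mono
        (SimpleFunc.eapprox_lt_top r (k + 1) x).ne
        (SimpleFunc.monotone_eapprox r (Nat.le_succ k) x))
    have hSle : ∀ k x, (SimpleFunc.eapprox r k) x ≤ r x := fun k x =>
      (le_iSup (fun n => (SimpleFunc.eapprox r n) x) k).trans_eq
        (SimpleFunc.iSup_eapprox_apply hrmeas x)
    have hSbound : ∀ k x, ‖(S k : G → ℂ) x‖ ≤ ‖u x‖ := by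
      intro k x
      rw [hS, Complex.norm_real, Real.norm_eq_abs, abs_of_nonneg ENNReal.toReal_nonneg]
      refine le_trans (ENNReal.toReal_mono ENNReal.ofReal_ne_top (hSle k x)) ?_
      rw [ENNReal.toReal_ofReal (hre x)]
      calc (u x).re ≤ |(u x).re| := le_abs_self _
        _ ≤ ‖u x‖ := by exact Complex.abs_re_le_norm _
    have hStend : ∀ x, Filter.Tendsto (fun k => (S k : G → ℂ) x) Filter.atTop (nhds (u x)) := by
      intro x
      have h1 : Filter.Tendsto (fun k => (SimpleFunc.eapprox r k) x) Filter.atTop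
          (nhds (r x)) := by
        rw [← SimpleFunc.iSup_eapprox_apply hrmeas x]
        exact tendsto_atTop_iSup (fun a b hab => SimpleFunc.monotone_eapprox r hab x)
      have h2 : Filter.Tendsto (fun k => (SimpleFunc.eapprox r k x).toReal) Filter.atTop
          (nhds (r x).toReal) := (ENNReal.tendsto_toReal ENNReal.ofReal_ne_top).comp h1
      have h3 := (Complex.continuous_ofReal.tendsto _).comp h2
      have h4 : (r x).toReal = (u x).re := ENNReal.toReal_ofReal (hre x)
      rw [Function.comp_def, h4, hux] at h3
      exact h3
    have hSdom : ∀ k, φ ∈ (Γ (S k : G → ℂ)).domain := fun k =>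
      hmem_bdd _ (hSmeas k) ((S k).exists_forall_norm_le) φ
    have hL := hqc u hu (fun k => (S k : G → ℂ)) hSmeas hSpos hSmono hStend ψ φ hφ hSdom
    have hR : Filter.Tendsto (fun k => cmIntegral (Eμ ψ φ) (S k : G → ℂ)) Filter.atTop
        (nhds (cmIntegral (Eμ ψ φ) u)) :=
      tendsto_cmIntegral hSmeas hu ((hdom u hu φ).1 hφ ψ) hSbound hStend
    exact tendsto_nhds_unique
      (hL.congr (fun k => hsimple (S k) ψ φ (hSdom k))) hR
  -- the general case
  intro f hf
  refine ⟨hdom f hf, ?_⟩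
  intro φ ψ
  have hCM : ∀ ψ' : H, CMIntegrable (Eμ ψ' (φ : H)) f := (hdom f hf (φ : H)).1 φ.2
  have hmk : ∀ v : G → ℂ, Measurable v → (∀ x, ‖v x‖ ≤ ‖f x‖) →
      ((φ : H) ∈ (Γ v).domain) ∧ CMIntegrable (Eμ ψ (φ : H)) v := by
    intro v hv hvb
    have hint : ∀ ψ' : H, CMIntegrable (Eμ ψ' (φ : H)) v := fun ψ' =>
      (hCM ψ').mono hv.aestronglyMeasurable (ae_of_all _ hvb)
    exact ⟨(hdom v hv (φ : H)).2 hint, hint ψ⟩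
  set p1 : G → ℂ := fun x => ((max (f x).re 0 : ℝ) : ℂ) with hp1def
  set p2 : G → ℂ := fun x => ((max (-(f x).re) 0 : ℝ) : ℂ) with hp2def
  set p3 : G → ℂ := fun x => ((max (f x).im 0 : ℝ) : ℂ) with hp3def
  set p4 : G → ℂ := fun x => ((max (-(f x).im) 0 : ℝ) : ℂ) with hp4def
  have hfre : Measurable fun x => (f x).re := Complex.measurable_re.comp hf
  have hfim : Measurable fun x => (f x).im := Complex.measurable_im.comp hf
  have hp1m : Measurable p1 := Complex.measurable_ofReal.comp (hfre.max measurable_const)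
  have hp2m : Measurable p2 := Complex.measurable_ofReal.comp (hfre.neg.max measurable_const)
  have hp3m : Measurable p3 := Complex.measurable_ofReal.comp (hfim.max measurable_const)
  have hp4m : Measurable p4 := Complex.measurable_ofReal.comp (hfim.neg.max measurable_const)
  have habs : ∀ a : ℝ, |max a 0| ≤ |a| := by
    intro a
    rw [abs_of_nonneg (le_max_right a 0)]
    exact max_le (le_abs_self a) (abs_nonneg a)
  have hb1 : ∀ x, ‖p1 x‖ ≤ ‖f x‖ := by
    intro x
    rw [hp1def, Complex.norm_real, Real.norm_eq_abs]
    exact (habs _).trans (Complex.abs_re_le_norm _)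
  have hb2 : ∀ x, ‖p2 x‖ ≤ ‖f x‖ := by
    intro x
    rw [hp2def, Complex.norm_real, Real.norm_eq_abs]
    exact (habs _).trans ((abs_neg _).le.trans (Complex.abs_re_le_norm _))
  have hb3 : ∀ x, ‖p3 x‖ ≤ ‖f x‖ := by
    intro x
    rw [hp3def, Complex.norm_real, Real.norm_eq_abs]
    exact (habs _).trans (Complex.abs_im_le_norm _)
  have hb4 : ∀ x, ‖p4 x‖ ≤ ‖f x‖ := by
    intro x
    rw [hp4def, Complex.norm_real, Real.norm_eq_abs]
    exact (habs _).trans ((abs_neg _).le.trans (Complex.abs_im_le_norm _))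
  have hpos1 : ∀ x, 0 ≤ p1 x := fun x => Complex.zero_le_real.2 (le_max_right _ _)
  have hpos2 : ∀ x, 0 ≤ p2 x := fun x => Complex.zero_le_real.2 (le_max_right _ _)
  have hpos3 : ∀ x, 0 ≤ p3 x := fun x => Complex.zero_le_real.2 (le_max_right _ _)
  have hpos4 : ∀ x, 0 ≤ p4 x := fun x => Complex.zero_le_real.2 (le_max_right _ _)
  obtain ⟨hm1, hi1⟩ := hmk p1 hp1m hb1
  obtain ⟨hm2, hi2⟩ := hmk p2 hp2m hb2
  obtain ⟨hm3, hi3⟩ := hmk p3 hp3m hb3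
  obtain ⟨hm4, hi4⟩ := hmk p4 hp4m hb4
  set g12 : G → ℂ := fun x => ((f x).re : ℂ) with hg12def
  set g34 : G → ℂ := fun x => ((f x).im : ℂ) with hg34def
  have hg12m : Measurable g12 := Complex.measurable_ofReal.comp hfre
  have hg34m : Measurable g34 := Complex.measurable_ofReal.comp hfim
  have hfun12 : (1 : ℂ) • p1 + (-1 : ℂ) • p2 = g12 := by
    funext x
    simp only [hp1def, hp2def, hg12def, Pi.add_apply, Pi.smul_apply, smul_eq_mul, one_mul,
      neg_one_mul]
    rw [← Complex.ofReal_neg, ← Complex.ofReal_add]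
    norm_cast
    rw [← sub_eq_add_neg]
    exact max_zero_sub_max_neg_zero_eq_self _
  have hfun34 : (1 : ℂ) • p3 + (-1 : ℂ) • p4 = g34 := by
    funext x
    simp only [hp3def, hp4def, hg34def, Pi.add_apply, Pi.smul_apply, smul_eq_mul, one_mul,
      neg_one_mul]
    rw [← Complex.ofReal_neg, ← Complex.ofReal_add]
    norm_cast
    rw [← sub_eq_add_neg]
    exact max_zero_sub_max_neg_zero_eq_self _
  have hfunf : (1 : ℂ) • g12 + Complex.I • g34 = f := by
    funext x
    simp only [hg12def, hg34def, Pi.add_apply, Pi.smul_apply, smul_eq_mul, one_mul]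
    rw [mul_comm]
    exact Complex.re_add_im (f x)
  obtain ⟨hw12, hv12⟩ := hval 1 (-1) p1 p2 g12 hp1m hp2m hfun12 (φ : H) hm1 hm2
  obtain ⟨hw34, hv34⟩ := hval 1 (-1) p3 p4 g34 hp3m hp4m hfun34 (φ : H) hm3 hm4
  obtain ⟨hwf, hvf⟩ := hval 1 Complex.I g12 g34 f hg12m hg34m hfunf (φ : H) hw12 hw34
  have hφeq : (Γ f) φ = (Γ f) ⟨(φ : H), hwf⟩ := by congr
  rw [hφeq, hvf, hv12, hv34]
  simp only [inner_add_right, inner_smul_right, one_smul]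
  rw [hnonneg p1 hp1m hpos1 ψ (φ : H) hm1, hnonneg p2 hp2m hpos2 ψ (φ : H) hm2,
    hnonneg p3 hp3m hpos3 ψ (φ : H) hm3, hnonneg p4 hp4m hpos4 ψ (φ : H) hm4]
  have hi12 : CMIntegrable (Eμ ψ (φ : H)) g12 := by
    rw [← hfun12]; exact (hi1.smul (1 : ℂ)).add (hi2.smul (-1 : ℂ))
  have hi34 : CMIntegrable (Eμ ψ (φ : H)) g34 := by
    rw [← hfun34]; exact (hi3.smul (1 : ℂ)).add (hi4.smul (-1 : ℂ))
  have e12 : cmIntegral (Eμ ψ (φ : H)) g12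
      = cmIntegral (Eμ ψ (φ : H)) p1 - cmIntegral (Eμ ψ (φ : H)) p2 := by
    rw [← hfun12, cmIntegral_smul_add 1 (-1) hi1 hi2]; ring
  have e34 : cmIntegral (Eμ ψ (φ : H)) g34
      = cmIntegral (Eμ ψ (φ : H)) p3 - cmIntegral (Eμ ψ (φ : H)) p4 := by
    rw [← hfun34, cmIntegral_smul_add 1 (-1) hi3 hi4]; ring
  have ef : cmIntegral (Eμ ψ (φ : H)) f
      = cmIntegral (Eμ ψ (φ : H)) g12 + Complex.I * cmIntegral (Eμ ψ (φ : H)) g34 := by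
    have h := cmIntegral_smul_add (μ := Eμ ψ (φ : H)) 1 Complex.I hi12 hi34
    rw [hfunf] at h
    rw [h]; ring
  rw [ef, e12, e34]
  ring

end QuantPaper
end
end
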